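/- arXiv:2401.11774 — 3 statements merged into one kernel-verified Lean document; each statement's English description precedes it below -/
import Mathlib

section
/- Assume the sign conditions hold and that the pair (A, B) is stabilizable. Then for every symmetric X̃ ∈ ℝ^{n×n} with X̃ ⪰ 0, the pair (A_c(X̃), G_c(X̃)) is stabilizable; that is, for every λ ∈ ℂ with Re λ ≥ 0 and every y ∈ ℂⁿ satisfying yᴴ(A_c(X̃) − λIₙ) = 0 and yᴴ G_c(X̃) = 0, one has y = 0. -/
open Matrix Filter

noncomputable section

/-- `Π₁₁(X) = Σᵢ (A₀ⁱ)ᵀ X A₀ⁱ`. -/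
def Pi11 {n r : ℕ} (A0 : Fin r → Matrix (Fin n) (Fin n) ℝ)
    (X : Matrix (Fin n) (Fin n) ℝ) : Matrix (Fin n) (Fin n) ℝ :=
  ∑ i, (A0 i)ᵀ * X * A0 i

/-- `Π₁₂(X) = Σᵢ (A₀ⁱ)ᵀ X B₀ⁱ`. -/
def Pi12 {n m r : ℕ} (A0 : Fin r → Matrix (Fin n) (Fin n) ℝ)
    (B0 : Fin r → Matrix (Fin n) (Fin m) ℝ)
    (X : Matrix (Fin n) (Fin n) ℝ) : Matrix (Fin n) (Fin m) ℝ :=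
  ∑ i, (A0 i)ᵀ * X * B0 i

/-- `Π₂₂(X) = Σᵢ (B₀ⁱ)ᵀ X B₀ⁱ`. -/
def Pi22 {n m r : ℕ} (B0 : Fin r → Matrix (Fin n) (Fin m) ℝ)
    (X : Matrix (Fin n) (Fin n) ℝ) : Matrix (Fin m) (Fin m) ℝ :=
  ∑ i, (B0 i)ᵀ * X * B0 i

/-- The block matrix `Π(X) = [Π₁₁(X), Π₁₂(X); Π₁₂(X)ᵀ, Π₂₂(X)]`. -/
def PiBlock {n m r : ℕ} (A0 : Fin r → Matrix (Fin n) (Fin n) ℝ)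
    (B0 : Fin r → Matrix (Fin n) (Fin m) ℝ)
    (X : Matrix (Fin n) (Fin n) ℝ) : Matrix (Fin n ⊕ Fin m) (Fin n ⊕ Fin m) ℝ :=
  fromBlocks (Pi11 A0 X) (Pi12 A0 B0 X) (Pi12 A0 B0 X)ᵀ (Pi22 B0 X)

/-- `L_c(X) = L + Π₁₂(X)`. -/
def Lc {n m r : ℕ} (L : Matrix (Fin n) (Fin m) ℝ)
    (A0 : Fin r → Matrix (Fin n) (Fin n) ℝ) (B0 : Fin r → Matrix (Fin n) (Fin m) ℝ)
    (X : Matrix (Fin n) (Fin n) ℝ) : Matrix (Fin n) (Fin m) ℝ :=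
  L + Pi12 A0 B0 X

/-- `R_c(X) = R + Π₂₂(X)`. -/
def Rc {n m r : ℕ} (R : Matrix (Fin m) (Fin m) ℝ)
    (B0 : Fin r → Matrix (Fin n) (Fin m) ℝ)
    (X : Matrix (Fin n) (Fin n) ℝ) : Matrix (Fin m) (Fin m) ℝ :=
  R + Pi22 B0 X

/-- `Q_c(X) = Q + Π₁₁(X)`. -/
def Qc {n r : ℕ} (Q : Matrix (Fin n) (Fin n) ℝ)
    (A0 : Fin r → Matrix (Fin n) (Fin n) ℝ)
    (X : Matrix (Fin n) (Fin n) ℝ) : Matrix (Fin n) (Fin n) ℝ :=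
  Q + Pi11 A0 X

/-- `A_c(X) = A − B R_c(X)⁻¹ L_c(X)ᵀ`. -/
def Ac {n m r : ℕ} (A : Matrix (Fin n) (Fin n) ℝ) (B : Matrix (Fin n) (Fin m) ℝ)
    (L : Matrix (Fin n) (Fin m) ℝ) (R : Matrix (Fin m) (Fin m) ℝ)
    (A0 : Fin r → Matrix (Fin n) (Fin n) ℝ) (B0 : Fin r → Matrix (Fin n) (Fin m) ℝ)
    (X : Matrix (Fin n) (Fin n) ℝ) : Matrix (Fin n) (Fin n) ℝ :=
  A - B * (Rc R B0 X)⁻¹ * (Lc L A0 B0 X)ᵀ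

/-- `G_c(X) = B R_c(X)⁻¹ Bᵀ`. -/
def Gc {n m r : ℕ} (B : Matrix (Fin n) (Fin m) ℝ) (R : Matrix (Fin m) (Fin m) ℝ)
    (B0 : Fin r → Matrix (Fin n) (Fin m) ℝ)
    (X : Matrix (Fin n) (Fin n) ℝ) : Matrix (Fin n) (Fin n) ℝ :=
  B * (Rc R B0 X)⁻¹ * Bᵀ

/-- `H_c(X) = Q_c(X) − L_c(X) R_c(X)⁻¹ L_c(X)ᵀ`. -/
def Hc {n m r : ℕ} (Q : Matrix (Fin n) (Fin n) ℝ) (L : Matrix (Fin n) (Fin m) ℝ)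
    (R : Matrix (Fin m) (Fin m) ℝ)
    (A0 : Fin r → Matrix (Fin n) (Fin n) ℝ) (B0 : Fin r → Matrix (Fin n) (Fin m) ℝ)
    (X : Matrix (Fin n) (Fin n) ℝ) : Matrix (Fin n) (Fin n) ℝ :=
  Qc Q A0 X - Lc L A0 B0 X * (Rc R B0 X)⁻¹ * (Lc L A0 B0 X)ᵀ

/-- The SCARE residual
`𝓡(X) = AᵀX + XA + Q_c(X) − (XB + L_c(X)) R_c(X)⁻¹ (XB + L_c(X))ᵀ`. -/
def scareRes {n m r : ℕ} (A : Matrix (Fin n) (Fin n) ℝ) (B : Matrix (Fin n) (Fin m) ℝ)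
    (Q : Matrix (Fin n) (Fin n) ℝ) (L : Matrix (Fin n) (Fin m) ℝ)
    (R : Matrix (Fin m) (Fin m) ℝ)
    (A0 : Fin r → Matrix (Fin n) (Fin n) ℝ) (B0 : Fin r → Matrix (Fin n) (Fin m) ℝ)
    (X : Matrix (Fin n) (Fin n) ℝ) : Matrix (Fin n) (Fin n) ℝ :=
  Aᵀ * X + X * A + Qc Q A0 X -
    (X * B + Lc L A0 B0 X) * (Rc R B0 X)⁻¹ * (X * B + Lc L A0 B0 X)ᵀ

/-- `Ω(X) = [−G_c(X), −A_c(X); −A_c(X)ᵀ, H_c(X)]`. -/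
def Omega {n m r : ℕ} (A : Matrix (Fin n) (Fin n) ℝ) (B : Matrix (Fin n) (Fin m) ℝ)
    (Q : Matrix (Fin n) (Fin n) ℝ) (L : Matrix (Fin n) (Fin m) ℝ)
    (R : Matrix (Fin m) (Fin m) ℝ)
    (A0 : Fin r → Matrix (Fin n) (Fin n) ℝ) (B0 : Fin r → Matrix (Fin n) (Fin m) ℝ)
    (X : Matrix (Fin n) (Fin n) ℝ) : Matrix (Fin n ⊕ Fin n) (Fin n ⊕ Fin n) ℝ :=
  fromBlocks (-(Gc B R B0 X)) (-(Ac A B L R A0 B0 X)) (-(Ac A B L R A0 B0 X))ᵀ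
    (Hc Q L R A0 B0 X)

/-- The `2n×n` matrix `[X; −Iₙ]` stacking `X` over `−Iₙ`. -/
def stackNegI {n : ℕ} (X : Matrix (Fin n) (Fin n) ℝ) :
    Matrix (Fin n ⊕ Fin n) (Fin n) ℝ :=
  fromRows X (-1)

/-- The pair `(A, B)` is stabilizable: `yᴴ(A − λI) = 0`, `yᴴB = 0`, `Re λ ≥ 0` imply `y = 0`. -/
def Stabilizable {n m : ℕ} (A : Matrix (Fin n) (Fin n) ℝ)
    (B : Matrix (Fin n) (Fin m) ℝ) : Prop :=
  ∀ (lam : ℂ) (y : Fin n → ℂ), 0 ≤ lam.re →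
    vecMul (star y) (A.map Complex.ofReal - lam • 1) = 0 →
    vecMul (star y) (B.map Complex.ofReal) = 0 → y = 0

/-- The pair `(C, A)` is detectable: `(A − λI)z = 0`, `Cz = 0`, `Re λ ≥ 0` imply `z = 0`. -/
def Detectable {p n : ℕ} (C : Matrix (Fin p) (Fin n) ℝ)
    (A : Matrix (Fin n) (Fin n) ℝ) : Prop :=
  ∀ (lam : ℂ) (z : Fin n → ℂ), 0 ≤ lam.re →
    mulVec (A.map Complex.ofReal - lam • 1) z = 0 →
    mulVec (C.map Complex.ofReal) z = 0 → z = 0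

/-- A real square matrix is stable if all its (complex) eigenvalues have negative real part. -/
def IsStableMatrix {n : ℕ} (M : Matrix (Fin n) (Fin n) ℝ) : Prop :=
  ∀ μ ∈ spectrum ℂ (M.map Complex.ofReal), μ.re < 0

/-- Kernel condition: `(Q − LR⁻¹Lᵀ)z = 0` implies `Lᵀz = 0` and `A₀ⁱ z = 0` for all `i`. -/
def KernelCondition {n m r : ℕ} (Q : Matrix (Fin n) (Fin n) ℝ)
    (L : Matrix (Fin n) (Fin m) ℝ) (R : Matrix (Fin m) (Fin m) ℝ)
    (A0 : Fin r → Matrix (Fin n) (Fin n) ℝ) : Prop :=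
  ∀ z : Fin n → ℂ,
    mulVec ((Q - L * R⁻¹ * Lᵀ).map Complex.ofReal) z = 0 →
    mulVec (Lᵀ.map Complex.ofReal) z = 0 ∧
      ∀ i, mulVec ((A0 i).map Complex.ofReal) z = 0

/-- `Γ(X) = [[0, −A, −B], [−Aᵀ, Q_c(X), L_c(X)], [−Bᵀ, L_c(X)ᵀ, R_c(X)]]`. -/
def Gamma {n m r : ℕ} (A : Matrix (Fin n) (Fin n) ℝ) (B : Matrix (Fin n) (Fin m) ℝ)
    (Q : Matrix (Fin n) (Fin n) ℝ) (L : Matrix (Fin n) (Fin m) ℝ)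
    (R : Matrix (Fin m) (Fin m) ℝ)
    (A0 : Fin r → Matrix (Fin n) (Fin n) ℝ) (B0 : Fin r → Matrix (Fin n) (Fin m) ℝ)
    (X : Matrix (Fin n) (Fin n) ℝ) :
    Matrix ((Fin n ⊕ Fin n) ⊕ Fin m) ((Fin n ⊕ Fin n) ⊕ Fin m) ℝ :=
  fromBlocks (fromBlocks 0 (-A) (-Aᵀ) (Qc Q A0 X))
    (fromRows (-B) (Lc L A0 B0 X))
    (fromRows (-B) (Lc L A0 B0 X))ᵀ
    (Rc R B0 X)

/-- `F_W(Y) = [Y; −Iₙ]ᵀ (Ω(Y) − Ω(W)) [Y; −Iₙ]`. -/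
def FW {n m r : ℕ} (A : Matrix (Fin n) (Fin n) ℝ) (B : Matrix (Fin n) (Fin m) ℝ)
    (Q : Matrix (Fin n) (Fin n) ℝ) (L : Matrix (Fin n) (Fin m) ℝ)
    (R : Matrix (Fin m) (Fin m) ℝ)
    (A0 : Fin r → Matrix (Fin n) (Fin n) ℝ) (B0 : Fin r → Matrix (Fin n) (Fin m) ℝ)
    (W Y : Matrix (Fin n) (Fin n) ℝ) : Matrix (Fin n) (Fin n) ℝ :=
  (stackNegI Y)ᵀ * (Omega A B Q L R A0 B0 Y - Omega A B Q L R A0 B0 W) * stackNegI Y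

/-- `𝓕_W(Z) = Kᵀ Π(Z) K` with `K = [−Iₙ; R_c(W)⁻¹ (L_c(W) + W B)ᵀ]`. -/
def Fcal {n m r : ℕ} (B : Matrix (Fin n) (Fin m) ℝ)
    (L : Matrix (Fin n) (Fin m) ℝ) (R : Matrix (Fin m) (Fin m) ℝ)
    (A0 : Fin r → Matrix (Fin n) (Fin n) ℝ) (B0 : Fin r → Matrix (Fin n) (Fin m) ℝ)
    (W Z : Matrix (Fin n) (Fin n) ℝ) : Matrix (Fin n) (Fin n) ℝ :=
  (fromRows (-1 : Matrix (Fin n) (Fin n) ℝ)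
      ((Rc R B0 W)⁻¹ * (Lc L A0 B0 W + W * B)ᵀ))ᵀ *
    PiBlock A0 B0 Z *
    fromRows (-1 : Matrix (Fin n) (Fin n) ℝ)
      ((Rc R B0 W)⁻¹ * (Lc L A0 B0 W + W * B)ᵀ)

/-!
Since `R_c(X̃) = R + Σᵢ (B₀ⁱ)ᵀ X̃ B₀ⁱ ≻ 0`, a covector `yᴴ` with `yᴴ G_c(X̃) = yᴴ B R_c(X̃)⁻¹ Bᵀ = 0`
gives `0 = w R_c(X̃)⁻¹ wᴴ` for `w = yᴴ B`, hence `yᴴ B = 0`. On such covectors the feedback term of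
`A_c(X̃) = A − B (R_c(X̃)⁻¹ L_c(X̃)ᵀ)` vanishes, so `yᴴ (A_c(X̃) − λ I) = yᴴ (A − λ I)`, and
stabilizability of `(A, B)` forces `y = 0`.
-/

namespace Matrix

variable {ι κ ν : Type*}

lemma map_ofReal_mul [Fintype κ] (M : Matrix ι κ ℝ) (N : Matrix κ ν ℝ) :
    (M * N).map Complex.ofReal = M.map Complex.ofReal * N.map Complex.ofReal :=
  Matrix.map_mul (f := Complex.ofRealHom)

lemma conjTranspose_map_ofReal (M : Matrix ι κ ℝ) :
    (M.map Complex.ofReal)ᴴ = Mᵀ.map Complex.ofReal := by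
  rw [← conjTranspose_map _ fun _ ↦ (Complex.conj_ofReal _).symm,
    conjTranspose_eq_transpose_of_trivial]

variable [Fintype ι]

open scoped ComplexOrder in
lemma PosSemidef.map_ofReal {M : Matrix ι ι ℝ} (hM : M.PosSemidef) :
    (M.map Complex.ofReal).PosSemidef := by
  classical
  open scoped MatrixOrder in
  obtain ⟨C, rfl⟩ := CStarAlgebra.nonneg_iff_eq_star_mul_self.mp hM.nonneg
  rw [star_eq_conjTranspose, map_ofReal_mul, conjTranspose_eq_transpose_of_trivial,
    ← conjTranspose_map_ofReal]
  exact posSemidef_conjTranspose_mul_self _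

open scoped ComplexOrder in
lemma PosDef.map_ofReal [DecidableEq ι] {M : Matrix ι ι ℝ} (hM : M.PosDef) :
    (M.map Complex.ofReal).PosDef :=
  hM.posSemidef.map_ofReal.posDef_iff_isUnit.mpr
    (hM.isUnit.map (Complex.ofRealHom.mapMatrix : Matrix ι ι ℝ →+* Matrix ι ι ℂ))

open scoped ComplexOrder in
lemma vecMul_map_ofReal_eq_zero_of_posDef [Fintype κ] [DecidableEq κ] {B : Matrix ι κ ℝ}
    {P : Matrix κ κ ℝ} (hP : P.PosDef) {y : ι → ℂ}
    (hy : star y ᵥ* (B * P * Bᵀ).map Complex.ofReal = 0) :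
    star y ᵥ* B.map Complex.ofReal = 0 := by
  set w := star y ᵥ* B.map Complex.ofReal
  have hw : star w = Bᵀ.map Complex.ofReal *ᵥ y := by
    rw [star_vecMul, conjTranspose_map_ofReal, star_star]
  by_contra hne
  have hpos := hP.map_ofReal.dotProduct_mulVec_pos (x := star w) (star_ne_zero.mpr hne)
  rw [star_star, hw, mulVec_mulVec, dotProduct_mulVec, vecMul_vecMul, ← Matrix.mul_assoc,
    ← map_ofReal_mul, ← map_ofReal_mul, hy, zero_dotProduct] at hpos
  exact hpos.false

end Matrix

section Stabilizable

variable {n m : ℕ} {A : Matrix (Fin n) (Fin n) ℝ} {B : Matrix (Fin n) (Fin m) ℝ}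

lemma Stabilizable.sub_mul (h : Stabilizable A B) (K : Matrix (Fin m) (Fin n) ℝ) :
    Stabilizable (A - B * K) B := by
  intro lam y hre hy hyB
  refine h lam y hre ?_ hyB
  rwa [Matrix.map_sub _ Complex.ofReal_sub, map_ofReal_mul, sub_sub, vecMul_sub, vecMul_add,
    ← vecMul_vecMul, hyB, zero_vecMul, zero_add, ← vecMul_sub] at hy

lemma Stabilizable.mul_posDef_mul_transpose (h : Stabilizable A B)
    {P : Matrix (Fin m) (Fin m) ℝ} (hP : P.PosDef) : Stabilizable A (B * P * Bᵀ) :=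
  fun lam y hre hy hyG ↦
    h lam y hre hy (vecMul_map_ofReal_eq_zero_of_posDef hP hyG)

end Stabilizable

lemma posSemidef_Pi22 {n m r : ℕ} (B0 : Fin r → Matrix (Fin n) (Fin m) ℝ)
    {X : Matrix (Fin n) (Fin n) ℝ} (hX : X.PosSemidef) : (Pi22 B0 X).PosSemidef :=
  posSemidef_sum _ fun i _ ↦ by
    simpa using hX.conjTranspose_mul_mul_same (B0 i)

lemma posDef_Rc {n m r : ℕ} {R : Matrix (Fin m) (Fin m) ℝ} (hR : R.PosDef)
    (B0 : Fin r → Matrix (Fin n) (Fin m) ℝ) {X : Matrix (Fin n) (Fin n) ℝ}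
    (hX : X.PosSemidef) : (Rc R B0 X).PosDef :=
  hR.add_posSemidef (posSemidef_Pi22 B0 hX)

theorem stmt0_general (n m r : ℕ)
    (A : Matrix (Fin n) (Fin n) ℝ) (B L : Matrix (Fin n) (Fin m) ℝ)
    (R : Matrix (Fin m) (Fin m) ℝ)
    (A0 : Fin r → Matrix (Fin n) (Fin n) ℝ) (B0 : Fin r → Matrix (Fin n) (Fin m) ℝ)
    (hRpd : R.PosDef)
    (hstab : Stabilizable A B) :
    ∀ Xt : Matrix (Fin n) (Fin n) ℝ, Xt.IsHermitian → Xt.PosSemidef →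
      Stabilizable (Ac A B L R A0 B0 Xt) (Gc B R B0 Xt) := by
  intro Xt _ hXt
  have hAc : Ac A B L R A0 B0 Xt = A - B * ((Rc R B0 Xt)⁻¹ * (Lc L A0 B0 Xt)ᵀ) :=
    congrArg (A - ·) (Matrix.mul_assoc _ _ _)
  rw [hAc]
  exact (hstab.sub_mul _).mul_posDef_mul_transpose (posDef_Rc hRpd B0 hXt).inv

/-- If the sign conditions hold and (A,B) is stabilizable, then for every symmetric
PSD X̃ the pair (A_c(X̃), G_c(X̃)) is stabilizable. -/
theorem stmt0 (n m r : ℕ) (hn : 0 < n) (hm : 0 < m) (hr : 0 < r)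
    (A Q : Matrix (Fin n) (Fin n) ℝ) (B L : Matrix (Fin n) (Fin m) ℝ)
    (R : Matrix (Fin m) (Fin m) ℝ)
    (A0 : Fin r → Matrix (Fin n) (Fin n) ℝ) (B0 : Fin r → Matrix (Fin n) (Fin m) ℝ)
    (hQ : Q.IsHermitian) (hRsymm : R.IsHermitian)
    (hRpd : R.PosDef) (hsign : (fromBlocks Q L Lᵀ R).PosSemidef)
    (hstab : Stabilizable A B) :
    ∀ Xt : Matrix (Fin n) (Fin n) ℝ, Xt.IsHermitian → Xt.PosSemidef →
      Stabilizable (Ac A B L R A0 B0 Xt) (Gc B R B0 Xt) :=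
  stmt0_general n m r A B L R A0 B0 hRpd hstab
end
end

section
/- Let p, m be positive integers and let M = [M₁₁, M₁₂; M₁₂ᵀ, M₂₂] and N = [N₁₁, N₁₂; N₁₂ᵀ, N₂₂] be real symmetric (p+m)×(p+m) block matrices (with M₁₁, N₁₁ of size p×p and M₂₂, N₂₂ of size m×m) such that M₂₂ and N₂₂ are positive definite. If M ⪰ N, then the Schur complements satisfy M₁₁ − M₁₂ M₂₂⁻¹ M₁₂ᵀ ⪰ N₁₁ − N₁₂ N₂₂⁻¹ N₁₂ᵀ. -/
open Matrix Filter

noncomputable section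

/-!
Completing the square, `[I; Y]ᴴ [A B; Bᴴ D] [I; Y] = (A - B D⁻¹ Bᴴ) + Zᴴ D Z` with
`Z = Y + D⁻¹ Bᴴ`, so the Schur complement `S = A - B D⁻¹ Bᴴ` is the value of this quadratic
expression at `Y = -D⁻¹ Bᴴ`. Evaluating both block matrices at the minimiser `Y` for `M` gives
`S(M) - S(N) = [I; Y]ᴴ (M - N) [I; Y] + Zᴴ N₂₂ Z`, a sum of two positive semidefinite matrices.
-/

namespace Matrix

variable {m n R : Type*} [Fintype m] [Fintype n] [DecidableEq m] [DecidableEq n]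

theorem schur_complement_eq₂₂_fromRows [CommRing R] [StarRing R] (A : Matrix m m R)
    (B : Matrix m n R) {D : Matrix n n R} (hD : D.IsHermitian) (hDu : IsUnit D.det)
    (Y : Matrix n m R) :
    (fromRows (1 : Matrix m m R) Y)ᴴ * fromBlocks A B Bᴴ D * fromRows (1 : Matrix m m R) Y =
      A - B * D⁻¹ * Bᴴ + (Y + D⁻¹ * Bᴴ)ᴴ * D * (Y + D⁻¹ * Bᴴ) := by
  simp only [conjTranspose_fromRows_eq_fromCols_conjTranspose, conjTranspose_one,
    fromCols_mul_fromBlocks, fromCols_mul_fromRows, conjTranspose_add, conjTranspose_mul,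
    conjTranspose_nonsing_inv, conjTranspose_conjTranspose, hD.eq, Matrix.one_mul, Matrix.mul_one,
    Matrix.add_mul, Matrix.mul_add, Matrix.mul_assoc, mul_nonsing_inv_cancel_left _ _ hDu,
    nonsing_inv_mul_cancel_left _ _ hDu]
  abel

theorem PosSemidef.schur_complement_sub_schur_complement [CommRing R] [PartialOrder R]
    [StarRing R] [StarOrderedRing R] {A₁ A₂ : Matrix m m R} {B₁ B₂ : Matrix m n R}
    {D₁ D₂ : Matrix n n R} (h : (fromBlocks A₁ B₁ B₁ᴴ D₁ - fromBlocks A₂ B₂ B₂ᴴ D₂).PosSemidef)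
    (hD₁ : D₁.IsHermitian) (hD₁u : IsUnit D₁.det) (hD₂ : D₂.PosSemidef) (hD₂u : IsUnit D₂.det) :
    (A₁ - B₁ * D₁⁻¹ * B₁ᴴ - (A₂ - B₂ * D₂⁻¹ * B₂ᴴ)).PosSemidef := by
  set Y := -(D₁⁻¹ * B₁ᴴ)
  set K : Matrix (m ⊕ n) m R := fromRows 1 Y
  have hK₁ : Kᴴ * fromBlocks A₁ B₁ B₁ᴴ D₁ * K = A₁ - B₁ * D₁⁻¹ * B₁ᴴ := by
    rw [schur_complement_eq₂₂_fromRows A₁ B₁ hD₁ hD₁u Y, neg_add_cancel, conjTranspose_zero,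
      Matrix.zero_mul, Matrix.zero_mul, add_zero]
  have hK₂ := schur_complement_eq₂₂_fromRows A₂ B₂ hD₂.isHermitian hD₂u Y
  have hdiff : A₁ - B₁ * D₁⁻¹ * B₁ᴴ - (A₂ - B₂ * D₂⁻¹ * B₂ᴴ) =
      Kᴴ * (fromBlocks A₁ B₁ B₁ᴴ D₁ - fromBlocks A₂ B₂ B₂ᴴ D₂) * K +
        (Y + D₂⁻¹ * B₂ᴴ)ᴴ * D₂ * (Y + D₂⁻¹ * B₂ᴴ) := by
    rw [Matrix.mul_sub, Matrix.sub_mul, hK₁, hK₂]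
    abel
  rw [hdiff]
  exact (h.conjTranspose_mul_mul_same K).add (hD₂.conjTranspose_mul_mul_same _)

end Matrix

theorem stmt5_general (p m : ℕ)
    (M11 N11 : Matrix (Fin p) (Fin p) ℝ) (M12 N12 : Matrix (Fin p) (Fin m) ℝ)
    (M22 N22 : Matrix (Fin m) (Fin m) ℝ)
    (hM22 : M22.PosDef) (hN22 : N22.PosDef)
    (hMN : (fromBlocks M11 M12 M12ᵀ M22 - fromBlocks N11 N12 N12ᵀ N22).PosSemidef) :
    (M11 - M12 * M22⁻¹ * M12ᵀ - (N11 - N12 * N22⁻¹ * N12ᵀ)).PosSemidef := by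
  simp only [← conjTranspose_eq_transpose_of_trivial] at hMN ⊢
  exact hMN.schur_complement_sub_schur_complement hM22.isHermitian
    ((isUnit_iff_isUnit_det _).mp hM22.isUnit) hN22.posSemidef
    ((isUnit_iff_isUnit_det _).mp hN22.isUnit)

/-- Monotonicity of the Schur complement: if M ⪰ N (symmetric block matrices with
positive definite lower-right blocks), then M₁₁ − M₁₂M₂₂⁻¹M₁₂ᵀ ⪰ N₁₁ − N₁₂N₂₂⁻¹N₁₂ᵀ. -/
theorem stmt5 (p m : ℕ) (hp : 0 < p) (hm : 0 < m)
    (M11 N11 : Matrix (Fin p) (Fin p) ℝ) (M12 N12 : Matrix (Fin p) (Fin m) ℝ)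
    (M22 N22 : Matrix (Fin m) (Fin m) ℝ)
    (hM11 : M11.IsHermitian) (hN11 : N11.IsHermitian)
    (hM22 : M22.PosDef) (hN22 : N22.PosDef)
    (hMN : (fromBlocks M11 M12 M12ᵀ M22 - fromBlocks N11 N12 N12ᵀ N22).PosSemidef) :
    (M11 - M12 * M22⁻¹ * M12ᵀ - (N11 - N12 * N22⁻¹ * N12ᵀ)).PosSemidef :=
  stmt5_general p m M11 N11 M12 N12 M22 N22 hM22 hN22 hMN
end
end

section
/- Assume R ≻ 0. Let X, Y ∈ ℝ^{n×n} be symmetric with 0 ⪯ X ⪯ Y, and suppose [X, −Iₙ] Ω(Y) [X; −Iₙ] = 0 (i.e., X solves the CARE whose coefficients are frozen at Y). Then 𝓡(X) ⪯ 0. -/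
open Matrix Filter

noncomputable section

/-!
Put `D = Y - X ⪰ 0` and let `K = (X B + L_c(Y)) R_c(Y)⁻¹` be the optimal gain of the frozen
equation. Completing the square around `K` in both Schur complements, the terms linear in the
coefficients collapse to `Π(D)` and the `Y`-square vanishes, leaving
`[X, -I] Ω(Y) [X; -I] - 𝓡(X) = Σᵢ (A₀ⁱ - B₀ⁱ Kᵀ)ᵀ D (A₀ⁱ - B₀ⁱ Kᵀ) + E R_c(X) Eᵀ`
with `E = (X B + L_c(X)) R_c(X)⁻¹ - K`. Both terms are `⪰ 0` since `D ⪰ 0` and `R_c(X) ≻ 0`.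
-/

namespace Matrix

theorem PosSemidef.transpose_eq {n R : Type*} [Fintype n] [Ring R] [PartialOrder R] [StarRing R]
    [TrivialStar R] {A : Matrix n n R} (h : A.PosSemidef) : Aᵀ = A :=
  (isHermitian_iff_isSymm.mp h.isHermitian).eq

theorem mul_nonsing_inv_mul_transpose_eq {m n α : Type*} [Fintype m] [DecidableEq m] [CommRing α]
    (T K : Matrix n m α) {R : Matrix m m α} (hR : IsUnit R.det) (hRt : Rᵀ = R) :
    T * R⁻¹ * Tᵀ = T * Kᵀ + K * Tᵀ - K * R * Kᵀ + (T * R⁻¹ - K) * R * (T * R⁻¹ - K)ᵀ := by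
  simp only [transpose_sub, transpose_mul, transpose_nonsing_inv, hRt, Matrix.sub_mul,
    Matrix.mul_sub, Matrix.mul_assoc, nonsing_inv_mul_cancel_left _ _ hR,
    mul_nonsing_inv_cancel_left _ _ hR]
  abel

end Matrix

section SCARE

variable {n m r : ℕ} (A : Matrix (Fin n) (Fin n) ℝ) (B : Matrix (Fin n) (Fin m) ℝ)
  (Q : Matrix (Fin n) (Fin n) ℝ) (L : Matrix (Fin n) (Fin m) ℝ) (R : Matrix (Fin m) (Fin m) ℝ)
  (A0 : Fin r → Matrix (Fin n) (Fin n) ℝ) (B0 : Fin r → Matrix (Fin n) (Fin m) ℝ)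

lemma Qc_sub_Qc (X Y : Matrix (Fin n) (Fin n) ℝ) : Qc Q A0 Y - Qc Q A0 X = Pi11 A0 (Y - X) := by
  simp [Qc, Pi11, Matrix.mul_sub, Matrix.sub_mul, Finset.sum_sub_distrib]

lemma Lc_sub_Lc (X Y : Matrix (Fin n) (Fin n) ℝ) :
    Lc L A0 B0 Y - Lc L A0 B0 X = Pi12 A0 B0 (Y - X) := by
  simp [Lc, Pi12, Matrix.mul_sub, Matrix.sub_mul, Finset.sum_sub_distrib]

lemma Rc_sub_Rc (X Y : Matrix (Fin n) (Fin n) ℝ) :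
    Rc R B0 Y - Rc R B0 X = Pi22 B0 (Y - X) := by
  simp [Rc, Pi22, Matrix.mul_sub, Matrix.sub_mul, Finset.sum_sub_distrib]

lemma Pi22_posSemidef {X : Matrix (Fin n) (Fin n) ℝ} (hX : X.PosSemidef) :
    (Pi22 B0 X).PosSemidef :=
  posSemidef_sum _ fun i _ => by
    simpa [conjTranspose_eq_transpose_of_trivial] using hX.conjTranspose_mul_mul_same (B0 i)

lemma Rc_posDef (hR : R.PosDef) {X : Matrix (Fin n) (Fin n) ℝ}
    (hX : X.PosSemidef) : (Rc R B0 X).PosDef :=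
  hR.add_posSemidef (Pi22_posSemidef B0 hX)

lemma sum_transpose_mul_mul_eq {D : Matrix (Fin n) (Fin n) ℝ} (hD : Dᵀ = D)
    (K : Matrix (Fin n) (Fin m) ℝ) :
    ∑ i, (A0 i - B0 i * Kᵀ)ᵀ * D * (A0 i - B0 i * Kᵀ) =
      Pi11 A0 D - Pi12 A0 B0 D * Kᵀ - K * (Pi12 A0 B0 D)ᵀ + K * Pi22 B0 D * Kᵀ := by
  simp only [Pi11, Pi12, Pi22, Matrix.sum_mul, Matrix.mul_sum, transpose_sum,
    ← Finset.sum_sub_distrib, ← Finset.sum_add_distrib]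
  refine Finset.sum_congr rfl fun i _ => ?_
  simp only [transpose_sub, transpose_mul, transpose_transpose, hD, Matrix.sub_mul,
    Matrix.mul_sub, Matrix.mul_assoc]
  abel

/-- The residual at `X` of the CARE whose coefficients are frozen at `Y`; `scareRes` is the
diagonal `Y = X`. -/
def frozenRes (Y X : Matrix (Fin n) (Fin n) ℝ) : Matrix (Fin n) (Fin n) ℝ :=
  Aᵀ * X + X * A + Qc Q A0 Y -
    (X * B + Lc L A0 B0 Y) * (Rc R B0 Y)⁻¹ * (X * B + Lc L A0 B0 Y)ᵀ

lemma stackNegI_transpose_mul_Omega_mul_stackNegI {X Y : Matrix (Fin n) (Fin n) ℝ}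
    (hX : Xᵀ = X) (hRY : (Rc R B0 Y)ᵀ = Rc R B0 Y) :
    (stackNegI X)ᵀ * Omega A B Q L R A0 B0 Y * stackNegI X = frozenRes A B Q L R A0 B0 Y X := by
  rw [stackNegI, Omega, transpose_fromRows, Matrix.mul_assoc, fromBlocks_mul_fromRows,
    fromCols_mul_fromRows]
  simp only [frozenRes, Gc, Ac, Hc, transpose_neg, transpose_one, transpose_sub, transpose_add,
    transpose_mul, transpose_transpose, transpose_nonsing_inv, hRY, hX, Matrix.neg_mul,
    Matrix.mul_neg, Matrix.sub_mul, Matrix.mul_sub, Matrix.add_mul, Matrix.mul_add,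
    Matrix.one_mul, Matrix.mul_one, neg_neg, Matrix.mul_assoc]
  abel

lemma frozenRes_sub_scareRes {X Y : Matrix (Fin n) (Fin n) ℝ} (hD : (Y - X)ᵀ = Y - X)
    (hRX : IsUnit (Rc R B0 X).det) (hRXt : (Rc R B0 X)ᵀ = Rc R B0 X)
    (hRY : IsUnit (Rc R B0 Y).det) (hRYt : (Rc R B0 Y)ᵀ = Rc R B0 Y) :
    let K := (X * B + Lc L A0 B0 Y) * (Rc R B0 Y)⁻¹
    let E := (X * B + Lc L A0 B0 X) * (Rc R B0 X)⁻¹ - K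
    frozenRes A B Q L R A0 B0 Y X - scareRes A B Q L R A0 B0 X =
      ∑ i, (A0 i - B0 i * Kᵀ)ᵀ * (Y - X) * (A0 i - B0 i * Kᵀ) + E * Rc R B0 X * Eᵀ := by
  intro K E
  have hXsq : (X * B + Lc L A0 B0 X) * (Rc R B0 X)⁻¹ * (X * B + Lc L A0 B0 X)ᵀ =
      (X * B + Lc L A0 B0 X) * Kᵀ + K * (X * B + Lc L A0 B0 X)ᵀ - K * Rc R B0 X * Kᵀ +
        E * Rc R B0 X * Eᵀ :=
    mul_nonsing_inv_mul_transpose_eq _ K hRX hRXt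
  have hYsq := mul_nonsing_inv_mul_transpose_eq (X * B + Lc L A0 B0 Y) K hRY hRYt
  rw [sub_self, Matrix.zero_mul, Matrix.zero_mul, add_zero] at hYsq
  rw [sum_transpose_mul_mul_eq A0 B0 hD, ← Qc_sub_Qc, ← Lc_sub_Lc, ← Rc_sub_Rc, frozenRes,
    scareRes, hXsq, hYsq]
  generalize E * Rc R B0 X * Eᵀ = S
  simp only [Matrix.sub_mul, Matrix.mul_sub, Matrix.add_mul, Matrix.mul_add, transpose_sub,
    transpose_add]
  abel

lemma posSemidef_frozenRes_sub_scareRes (hR : R.PosDef)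
    {X Y : Matrix (Fin n) (Fin n) ℝ} (hX : X.PosSemidef) (hXY : (Y - X).PosSemidef) :
    (frozenRes A B Q L R A0 B0 Y X - scareRes A B Q L R A0 B0 X).PosSemidef := by
  have hRX := Rc_posDef R B0 hR hX
  have hRY := Rc_posDef R B0 hR (by simpa using hX.add hXY)
  rw [frozenRes_sub_scareRes A B Q L R A0 B0 hXY.transpose_eq
    ((isUnit_iff_isUnit_det _).mp hRX.isUnit) hRX.posSemidef.transpose_eq
    ((isUnit_iff_isUnit_det _).mp hRY.isUnit) hRY.posSemidef.transpose_eq]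
  refine .add (posSemidef_sum _ fun i _ => ?_) ?_
  · simpa only [conjTranspose_eq_transpose_of_trivial] using hXY.conjTranspose_mul_mul_same _
  · simpa only [conjTranspose_eq_transpose_of_trivial] using
      hRX.posSemidef.mul_mul_conjTranspose_same _

end SCARE

theorem stmt10_general (n m r : ℕ)
    (A Q : Matrix (Fin n) (Fin n) ℝ) (B L : Matrix (Fin n) (Fin m) ℝ)
    (R : Matrix (Fin m) (Fin m) ℝ)
    (A0 : Fin r → Matrix (Fin n) (Fin n) ℝ) (B0 : Fin r → Matrix (Fin n) (Fin m) ℝ)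
    (hRpd : R.PosDef)
    (X Y : Matrix (Fin n) (Fin n) ℝ)
    (hXpsd : X.PosSemidef) (hXY : (Y - X).PosSemidef)
    (hfroz : (stackNegI X)ᵀ * Omega A B Q L R A0 B0 Y * stackNegI X = 0) :
    (-(scareRes A B Q L R A0 B0 X)).PosSemidef := by
  have hRY : (Rc R B0 Y).PosDef := Rc_posDef R B0 hRpd (by simpa using hXpsd.add hXY)
  rw [stackNegI_transpose_mul_Omega_mul_stackNegI A B Q L R A0 B0 hXpsd.transpose_eq
    hRY.posSemidef.transpose_eq] at hfroz
  simpa [hfroz] using posSemidef_frozenRes_sub_scareRes A B Q L R A0 B0 hRpd hXpsd hXY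

/-- If R ≻ 0, 0 ⪯ X ⪯ Y and X solves the CARE frozen at Y, then 𝓡(X) ⪯ 0. -/
theorem stmt10 (n m r : ℕ) (hn : 0 < n) (hm : 0 < m) (hr : 0 < r)
    (A Q : Matrix (Fin n) (Fin n) ℝ) (B L : Matrix (Fin n) (Fin m) ℝ)
    (R : Matrix (Fin m) (Fin m) ℝ)
    (A0 : Fin r → Matrix (Fin n) (Fin n) ℝ) (B0 : Fin r → Matrix (Fin n) (Fin m) ℝ)
    (hQ : Q.IsHermitian) (hRsymm : R.IsHermitian)
    (hRpd : R.PosDef)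
    (X Y : Matrix (Fin n) (Fin n) ℝ)
    (hX : X.IsHermitian) (hY : Y.IsHermitian)
    (hXpsd : X.PosSemidef) (hXY : (Y - X).PosSemidef)
    (hfroz : (stackNegI X)ᵀ * Omega A B Q L R A0 B0 Y * stackNegI X = 0) :
    (-(scareRes A B Q L R A0 B0 X)).PosSemidef :=
  stmt10_general n m r A Q B L R A0 B0 hRpd X Y hXpsd hXY hfroz
end
end
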